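/- Fix a prime ℓ and a partition μ of n. Define integers b_{i,j}(μ) for i ≥ 0, j ≥ 1 by the base-ℓ expansions μ_j − μ_{j+1} = Σ_{i≥0} b_{i,j}(μ)·ℓ^i with 0 ≤ b_{i,j}(μ) < ℓ. Then there is a unique ν ∈ Part(n,ℓ) and unique ℓ-regular partitions λ^(ℓ^i) of m_{ℓ^i}(ν) such that m_j(λ^(ℓ^i)) = b_{i,j}(μ) for all i, j; moreover μ = Σ_{i≥0} ℓ^i·(λ^(ℓ^i))ᵗ. -/

import Mathlib

/-- A function `f : ℕ → ℕ` is a partition of `m` if it is weakly decreasing,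
has finite support, and its parts sum to `m`.  Here `f i` is the `(i+1)`-st part
`λ_{i+1}` of the partition. -/
def IsPartition (m : ℕ) (f : ℕ → ℕ) : Prop :=
  Antitone f ∧ (Function.support f).Finite ∧ ∑ᶠ i, f i = m

/-- The transpose partition: `ptranspose f j` is the `(j+1)`-st part `(fᵗ)_{j+1}`
of the transpose, i.e. the number of indices `i` with `f i ≥ j + 1`. -/
noncomputable def ptranspose (f : ℕ → ℕ) : ℕ → ℕ :=
  fun j => {i : ℕ | j + 1 ≤ f i}.ncard

/-- `pmult f j` is the multiplicity `m_j(f)` of `j ≥ 1` as a part of `f`. -/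
noncomputable def pmult (f : ℕ → ℕ) (j : ℕ) : ℕ :=
  {i : ℕ | f i = j}.ncard

/-- All (nonzero) parts of `f` are powers of `ℓ`. -/
def PartsPowersOf (ℓ : ℕ) (f : ℕ → ℕ) : Prop :=
  ∀ i, f i ≠ 0 → ∃ k, f i = ℓ ^ k

/-- `f` is `ℓ`-regular: every part `j ≥ 1` has multiplicity `< ℓ`. -/
def IsRegularPartition (ℓ : ℕ) (f : ℕ → ℕ) : Prop :=
  ∀ j, 1 ≤ j → pmult f j < ℓ

/-- The combinatorial generalized Springer map: given a tuple `lam` where `lam i`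
is (meant to be) an `ℓ`-regular partition of `m_{ℓ^i}(ν)`, it returns the
partition `Σ_{i ≥ 0} ℓ^i · (lam i)ᵗ` (componentwise operations). -/
noncomputable def psiCo (ℓ : ℕ) (lam : ℕ → ℕ → ℕ) : ℕ → ℕ :=
  fun j => ∑ᶠ i, ℓ ^ i * ptranspose (lam i) j


/-!
Write `cᵢ = (λ^(ℓ^i))ᵗ`. Since `m_j(λ) = λᵗ_j - λᵗ_{j+1}`, the condition `m_j(λ^(ℓ^i)) = b_{i,j}`
forces `cᵢ_j = Σ_{k ≥ j} b_{i,k}`, and a partition is the transpose of its transpose. Summing the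
expansions of `μ_k - μ_{k+1}` over `k ≥ j` gives `μ = Σᵢ ℓ^i cᵢ`. Then `ν` has to be the partition
with `|λ^(ℓ^i)|` parts equal to `ℓ^i` and no other parts, and it is a partition of
`Σᵢ ℓ^i |cᵢ| = |μ| = n`. Uniqueness holds because a partition is determined by its multiplicities.
-/

open Function
open scoped Finset

lemma exists_forall_le_eq_zero {f : ℕ → ℕ} (hfin : (support f).Finite) :
    ∃ K, ∀ j, K ≤ j → f j = 0 := by
  obtain ⟨B, hB⟩ := hfin.bddAbove
  exact ⟨B + 1, fun j hj => not_ne_iff.1 fun h => by have := hB h; omega⟩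

lemma eq_of_eq_add_succ {u v d : ℕ → ℕ} (hu : (support u).Finite) (hv : (support v).Finite)
    (hud : ∀ j, u j = d (j + 1) + u (j + 1)) (hvd : ∀ j, v j = d (j + 1) + v (j + 1)) :
    u = v := by
  obtain ⟨K, hK⟩ := exists_forall_le_eq_zero hu
  obtain ⟨K', hK'⟩ := exists_forall_le_eq_zero hv
  suffices h : ∀ t j, K + K' ≤ j + t → u j = v j from funext fun j => h (K + K') j (by omega)
  intro t
  induction t with
  | zero => intro j hj; rw [hK j (by omega), hK' j (by omega)]
  | succ t ih => intro j hj; rw [hud, hvd, ih (j + 1) (by omega)]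

section Transpose

variable {f : ℕ → ℕ} (hf : Antitone f) (hfin : (support f).Finite)
include hf hfin

lemma lt_ptranspose_iff (m i : ℕ) : i < ptranspose f m ↔ m + 1 ≤ f i := by
  constructor
  · intro hi
    by_contra hmi
    have hsub : {k | m + 1 ≤ f k} ⊆ Set.Iio i := fun k hk =>
      lt_of_not_ge fun hik => hmi (le_trans hk (hf hik))
    have := Set.ncard_le_ncard hsub (Set.finite_Iio i)
    rw [Set.ncard_Iio_nat] at this
    exact absurd hi (not_lt.2 this)
  · intro hmi
    have hS : {k | m + 1 ≤ f k}.Finite := hfin.subset fun k (hk : m + 1 ≤ f k) =>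
      Nat.ne_zero_of_lt hk
    have := Set.ncard_le_ncard (s := Set.Iic i) (fun k hk => hmi.trans (hf hk)) hS
    rwa [Set.ncard_Iic_nat] at this

lemma ptranspose_ptranspose : ptranspose (ptranspose f) = f := by
  funext i
  have : {m | i + 1 ≤ ptranspose f m} = Set.Iio (f i) := by
    ext m
    exact (lt_ptranspose_iff hf hfin m i).trans Nat.add_one_le_iff
  rw [ptranspose, this, Set.ncard_Iio_nat]

lemma antitone_ptranspose : Antitone (ptranspose f) := fun m m' hm =>
  le_of_forall_lt fun i hi => (lt_ptranspose_iff hf hfin m i).2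
    ((Nat.add_le_add_right hm 1).trans ((lt_ptranspose_iff hf hfin m' i).1 hi))

lemma ptranspose_eq_zero_of_le {m : ℕ} (hm : f 0 ≤ m) : ptranspose f m = 0 :=
  Nat.eq_zero_of_not_pos fun h => by have := (lt_ptranspose_iff hf hfin m 0).1 h; omega

lemma finite_support_ptranspose : (support (ptranspose f)).Finite :=
  (Set.finite_Iio (f 0)).subset fun _ hm =>
    lt_of_not_ge fun h => hm (ptranspose_eq_zero_of_le hf hfin h)

lemma ptranspose_eq_pmult_add (j : ℕ) :
    ptranspose f j = pmult f (j + 1) + ptranspose f (j + 1) := by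
  have : {i | f i = j + 1} = Set.Ico (ptranspose f (j + 1)) (ptranspose f j) := by
    ext i
    have h₁ := lt_ptranspose_iff hf hfin j i
    have h₂ := lt_ptranspose_iff hf hfin (j + 1) i
    simp only [Set.mem_Ico, Set.mem_ofPred_eq]
    omega
  rw [pmult, this, Set.ncard_Ico_nat]
  have := antitone_ptranspose hf hfin (Nat.le_add_right j 1)
  omega

lemma finsum_ptranspose : ∑ᶠ m, ptranspose f m = ∑ᶠ i, f i := by
  classical
  obtain ⟨K, hK⟩ := exists_forall_le_eq_zero hfin
  have hcard (m : ℕ) : ptranspose f m = #{i ∈ Finset.range K | m < f i} := by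
    rw [ptranspose, ← Set.ncard_coe_finset]
    congr 1
    ext i
    simp only [Finset.coe_filter, Finset.mem_range, Set.mem_ofPred_eq]
    exact ⟨fun h => ⟨lt_of_not_ge fun hi => by have := hK i hi; omega, h⟩, And.right⟩
  rw [finsum_eq_sum_of_support_subset (s := Finset.range (f 0)) _ fun m hm =>
      Finset.mem_coe.2 (Finset.mem_range.2 (lt_of_not_ge fun h =>
        hm (ptranspose_eq_zero_of_le hf hfin h))),
    finsum_eq_sum_of_support_subset (s := Finset.range K) _ fun i hi =>
      Finset.mem_coe.2 (Finset.mem_range.2 (lt_of_not_ge fun h => hi (hK i h)))]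
  simp_rw [hcard]
  refine (Finset.sum_card_bipartiteAbove_eq_sum_card_bipartiteBelow (r := fun m i => m < f i)).trans
    (Finset.sum_congr rfl fun i _ => ?_)
  have hi : f i ≤ f 0 := hf (Nat.zero_le i)
  have : (Finset.range (f 0)).bipartiteBelow (fun m i => m < f i) i = Finset.range (f i) := by
    ext m
    simp only [Finset.bipartiteBelow, Finset.mem_filter, Finset.mem_range]
    omega
  rw [this, Finset.card_range]

end Transpose

lemma finsum_eq_finsum_mul_pmult {f : ℕ → ℕ} (hfin : (support f).Finite) :
    ∑ᶠ i, f i = ∑ᶠ k, k * pmult f k := by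
  classical
  set s := hfin.toFinset
  have hsupp : support (fun k => k * pmult f k) ⊆ ↑(s.image f) := by
    intro k hk
    obtain ⟨i, rfl⟩ := Set.nonempty_of_ncard_ne_zero (right_ne_zero_of_mul hk)
    exact Finset.mem_coe.2 (Finset.mem_image_of_mem f (by simpa [s] using left_ne_zero_of_mul hk))
  have hpmult (k) (hk : k ∈ s.image f) : pmult f k = #{i ∈ s | f i = k} := by
    obtain ⟨i, hi, rfl⟩ := Finset.mem_image.1 hk
    rw [pmult, ← Set.ncard_coe_finset]
    congr 1
    ext j
    simp only [Set.mem_ofPred_eq, Finset.coe_filter, s, Set.Finite.mem_toFinset, mem_support]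
    exact ⟨fun h => ⟨h ▸ (by simpa [s] using hi), h⟩, And.right⟩
  rw [finsum_eq_sum_of_support_subset f (s := s) (by simp [s]),
    finsum_eq_sum_of_support_subset _ hsupp, Finset.sum_comp (fun k => k) f]
  exact Finset.sum_congr rfl fun k hk => by rw [hpmult k hk, smul_eq_mul, mul_comm]

noncomputable def tailSum (d : ℕ → ℕ) (j : ℕ) : ℕ := ∑ᶠ k ∈ Set.Ioi j, d k

section TailSum

variable {d : ℕ → ℕ}

lemma exists_ne_zero_of_tailSum_ne_zero {j : ℕ} (h : tailSum d j ≠ 0) : ∃ k, j < k ∧ d k ≠ 0 :=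
  exists_ne_zero_of_finsum_mem_ne_zero h

variable (hd : (support d).Finite)
include hd

lemma tailSum_eq_add (j : ℕ) : tailSum d j = d (j + 1) + tailSum d (j + 1) := by
  have : Set.Ioi j = insert (j + 1) (Set.Ioi (j + 1)) := by ext; simp
  rw [tailSum, this, finsum_mem_insert' _ (by simp) (hd.subset Set.inter_subset_right)]
  rfl

lemma antitone_tailSum : Antitone (tailSum d) :=
  antitone_nat_of_succ_le fun j => (tailSum_eq_add hd j).symm ▸ Nat.le_add_left _ _

lemma finite_support_tailSum : (support (tailSum d)).Finite := by
  obtain ⟨K, hK⟩ := exists_forall_le_eq_zero hd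
  refine (Set.finite_Iio K).subset fun j hj => Set.mem_Iio.2 (lt_of_not_ge fun hKj => ?_)
  obtain ⟨k, hjk, hk⟩ := exists_ne_zero_of_tailSum_ne_zero hj
  exact hk (hK k (by omega))

end TailSum

noncomputable def partitionOfMult (d : ℕ → ℕ) : ℕ → ℕ := ptranspose (tailSum d)

section PartitionOfMult

variable {d : ℕ → ℕ} (hd : (support d).Finite)
include hd

lemma antitone_partitionOfMult : Antitone (partitionOfMult d) :=
  antitone_ptranspose (antitone_tailSum hd) (finite_support_tailSum hd)

lemma finite_support_partitionOfMult : (support (partitionOfMult d)).Finite :=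
  finite_support_ptranspose (antitone_tailSum hd) (finite_support_tailSum hd)

lemma ptranspose_partitionOfMult : ptranspose (partitionOfMult d) = tailSum d :=
  ptranspose_ptranspose (antitone_tailSum hd) (finite_support_tailSum hd)

lemma isPartition_partitionOfMult : IsPartition (∑ᶠ j, tailSum d j) (partitionOfMult d) :=
  ⟨antitone_partitionOfMult hd, finite_support_partitionOfMult hd,
    finsum_ptranspose (antitone_tailSum hd) (finite_support_tailSum hd)⟩

lemma pmult_partitionOfMult {k : ℕ} (hk : 1 ≤ k) : pmult (partitionOfMult d) k = d k := by
  obtain ⟨j, rfl⟩ := Nat.exists_eq_add_of_le' hk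
  have h := ptranspose_eq_pmult_add (antitone_partitionOfMult hd)
    (finite_support_partitionOfMult hd) j
  rw [ptranspose_partitionOfMult hd, tailSum_eq_add hd] at h
  omega

lemma eq_partitionOfMult {f : ℕ → ℕ} (hf : Antitone f) (hfin : (support f).Finite)
    (hfd : ∀ k, 1 ≤ k → pmult f k = d k) : f = partitionOfMult d := by
  have : ptranspose f = tailSum d :=
    eq_of_eq_add_succ (finite_support_ptranspose hf hfin) (finite_support_tailSum hd)
      (fun j => hfd (j + 1) (Nat.le_add_left 1 j) ▸ ptranspose_eq_pmult_add hf hfin j)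
      (tailSum_eq_add hd)
  rw [← ptranspose_ptranspose hf hfin, this, partitionOfMult]

end PartitionOfMult

lemma pmult_apply_ne_zero {f : ℕ → ℕ} (hfin : (support f).Finite) {r : ℕ} (hr : f r ≠ 0) :
    pmult f (f r) ≠ 0 :=
  ((Set.ncard_pos (hfin.subset fun i (hi : f i = f r) => by rwa [mem_support, hi])).2 ⟨r, rfl⟩).ne'

lemma finsum_mul_extend {ι : Type*} {e : ι → ℕ} (he : Injective e) (M : ι → ℕ) :
    ∑ᶠ k, k * extend e M 0 k = ∑ᶠ i, e i * M i := by
  rw [← finsum_mem_univ, finsum_mem_inter_support_eq' _ _ (Set.range e), finsum_mem_range he]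
  · simp only [he.extend_apply]
  · intro k hk
    simp only [Set.mem_univ, Set.mem_range, true_iff]
    by_contra h
    exact hk (by simp only [extend_apply' _ _ _ h, Pi.zero_apply, mul_zero])

/-- The partition with `M i` parts equal to `ℓ ^ i` for every `i`, and no other parts. -/
noncomputable def powPartition (ℓ : ℕ) (M : ℕ → ℕ) : ℕ → ℕ :=
  partitionOfMult (extend (ℓ ^ ·) M 0)

section PowPartition

variable {ℓ : ℕ} (hℓ : 1 < ℓ) {M : ℕ → ℕ} (hM : (support M).Finite)
include hℓ hM

lemma finite_support_extend_pow : (support (extend (ℓ ^ ·) M 0)).Finite := by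
  refine (hM.image (ℓ ^ ·)).subset fun k hk => ?_
  by_cases h : ∃ i, ℓ ^ i = k
  · obtain ⟨i, rfl⟩ := h
    rw [mem_support, (Nat.pow_right_injective hℓ).extend_apply] at hk
    exact ⟨i, hk, rfl⟩
  · exact absurd (extend_apply' _ _ _ h) hk

lemma pmult_powPartition_pow (i : ℕ) : pmult (powPartition ℓ M) (ℓ ^ i) = M i := by
  rw [powPartition, pmult_partitionOfMult (finite_support_extend_pow hℓ hM) (Nat.one_le_pow _ _
    (by omega)), (Nat.pow_right_injective hℓ).extend_apply]

lemma partsPowersOf_powPartition : PartsPowersOf ℓ (powPartition ℓ M) := by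
  intro r hr
  unfold powPartition at hr ⊢
  have hd := finite_support_extend_pow hℓ hM
  have h := pmult_apply_ne_zero (finite_support_partitionOfMult hd) hr
  rw [pmult_partitionOfMult hd (Nat.one_le_iff_ne_zero.2 hr)] at h
  by_contra hpow
  exact h (extend_apply' _ _ _ fun ⟨i, hi⟩ => hpow ⟨i, hi.symm⟩)

lemma isPartition_powPartition : IsPartition (∑ᶠ i, ℓ ^ i * M i) (powPartition ℓ M) := by
  unfold powPartition
  have hd := finite_support_extend_pow hℓ hM
  refine ⟨antitone_partitionOfMult hd, finite_support_partitionOfMult hd, ?_⟩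
  rw [finsum_eq_finsum_mul_pmult (finite_support_partitionOfMult hd),
    ← finsum_mul_extend (Nat.pow_right_injective hℓ)]
  refine finsum_congr fun k => ?_
  rcases Nat.eq_zero_or_pos k with rfl | hk
  · simp
  · rw [pmult_partitionOfMult hd hk]

lemma eq_powPartition {ν : ℕ → ℕ} (hν : Antitone ν) (hνfin : (support ν).Finite)
    (hνpow : PartsPowersOf ℓ ν) (hνM : ∀ i, pmult ν (ℓ ^ i) = M i) : ν = powPartition ℓ M := by
  refine eq_partitionOfMult (finite_support_extend_pow hℓ hM) hν hνfin fun k hk => ?_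
  by_cases h : ∃ i, ℓ ^ i = k
  · obtain ⟨i, rfl⟩ := h
    rw [hνM, (Nat.pow_right_injective hℓ).extend_apply]
  · have hnone : {r | ν r = k} = ∅ := Set.eq_empty_of_forall_notMem fun r (hr : ν r = k) => by
      obtain ⟨i, hi⟩ := hνpow r (by omega)
      exact h ⟨i, hi ▸ hr⟩
    rw [extend_apply' _ _ _ h, pmult, hnone, Set.ncard_empty, Pi.zero_apply]

end PowPartition

section Uncurry

variable {α β M : Type*} [AddCommMonoid M] {F : α → β → M} (hF : (support (uncurry F)).Finite)
include hF

lemma finite_support_uncurry_swap : (support (uncurry (swap F))).Finite :=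
  hF.preimage Prod.swap_injective.injOn

lemma finite_support_apply (a : α) : (support (F a)).Finite :=
  hF.preimage (Prod.mk_right_injective a).injOn

lemma finite_support_finsum : (support fun a => ∑ᶠ b, F a b).Finite := by
  refine (hF.image Prod.fst).subset fun a ha => ?_
  by_contra! h
  exact ha (finsum_eq_zero_of_forall_eq_zero fun b => not_ne_iff.1 fun hb => h ⟨(a, b), hb, rfl⟩)

lemma finsum_comm_of_finite_support : ∑ᶠ a, ∑ᶠ b, F a b = ∑ᶠ b, ∑ᶠ a, F a b := by
  calc ∑ᶠ a, ∑ᶠ b, F a b = ∑ᶠ p, uncurry F p := (finsum_curry _ hF).symm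
    _ = ∑ᶠ q, uncurry (swap F) q := (finsum_comp_equiv (Equiv.prodComm β α)).symm
    _ = ∑ᶠ b, ∑ᶠ a, F a b := finsum_curry _ (finite_support_uncurry_swap hF)

end Uncurry

section Digits

variable {ι : Type*} {μ : ℕ → ℕ} {b : ι → ℕ → ℕ} {w : ι → ℕ}

lemma finite_support_uncurry_of_eq_add (hw : ∀ i, w i ≠ 0) (hμ : (support μ).Finite)
    (hbfin : ∀ j, (support fun i => b i j).Finite)
    (hb : ∀ j, 1 ≤ j → μ (j - 1) = μ j + ∑ᶠ i, b i j * w i) :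
    (support (uncurry b)).Finite := by
  obtain ⟨K, hK⟩ := exists_forall_le_eq_zero hμ
  have hbK (i : ι) (k : ℕ) (hik : b i k ≠ 0) : k ≤ K := by
    by_contra! hk
    have hsum := hb k (by omega)
    rw [hK _ (by omega), hK _ (by omega)] at hsum
    have := single_le_finsum i ((hbfin k).subset (support_mul_subset_left _ _))
      (fun i => Nat.zero_le (b i k * w i))
    exact mul_ne_zero hik (hw i) (by omega)
  refine ((Set.finite_Iic K).biUnion fun k _ => (hbfin k).prod (Set.finite_singleton k)).subset ?_
  rintro ⟨i, k⟩ hik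
  exact Set.mem_biUnion (hbK i k hik) ⟨hik, rfl⟩

variable (hbs : (support (uncurry b)).Finite)
include hbs

lemma finite_support_uncurry_tailSum : (support (uncurry fun i j => tailSum (b i) j)).Finite := by
  refine (hbs.biUnion fun p _ => (Set.finite_singleton p.1).prod (Set.finite_Iio p.2)).subset ?_
  rintro ⟨i, j⟩ hij
  obtain ⟨k, hjk, hk⟩ := exists_ne_zero_of_tailSum_ne_zero hij
  exact Set.mem_biUnion (x := (i, k)) hk ⟨rfl, hjk⟩

lemma finite_support_uncurry_mul_tailSum :
    (support (uncurry fun i j => w i * tailSum (b i) j)).Finite :=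
  (finite_support_uncurry_tailSum hbs).subset fun _ hp => right_ne_zero_of_mul hp

variable (hμ : (support μ).Finite) (hb : ∀ j, 1 ≤ j → μ (j - 1) = μ j + ∑ᶠ i, b i j * w i)
include hμ hb

lemma eq_finsum_mul_tailSum : μ = fun j => ∑ᶠ i, w i * tailSum (b i) j := by
  have hT := finite_support_uncurry_mul_tailSum (w := w) hbs
  refine eq_of_eq_add_succ (d := fun k => ∑ᶠ i, b i k * w i) hμ
    (finite_support_finsum (finite_support_uncurry_swap hT)) (fun j => ?_) (fun j => ?_)
  · have := hb (j + 1) (Nat.le_add_left 1 j)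
    rw [Nat.add_sub_cancel] at this
    omega
  · rw [← finsum_add_distrib ((finite_support_apply (finite_support_uncurry_swap hbs) (j + 1)).subset
      (support_mul_subset_left _ _)) (finite_support_apply (finite_support_uncurry_swap hT) (j + 1))]
    refine finsum_congr fun i => ?_
    rw [tailSum_eq_add (finite_support_apply hbs i)]
    ring

lemma finsum_eq_finsum_mul_finsum_tailSum :
    ∑ᶠ j, μ j = ∑ᶠ i, w i * ∑ᶠ j, tailSum (b i) j := by
  conv_lhs => rw [eq_finsum_mul_tailSum hbs hμ hb]
  rw [← finsum_comm_of_finite_support (finite_support_uncurry_mul_tailSum hbs)]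
  simp_rw [mul_finsum]

end Digits

/-- Fix a prime `ℓ` and a partition `μ` of `n`, and let `b i j` (for `j ≥ 1`)
be the base-`ℓ` digits of `μ_j − μ_{j+1}`, i.e. `μ_j − μ_{j+1} = Σ_i b i j·ℓ^i`
with `b i j < ℓ`.  Then there is a unique pair `(ν, lam)` with `ν ∈ Part(n,ℓ)`
and `lam i` an `ℓ`-regular partition of `m_{ℓ^i}(ν)` such that
`m_j(lam i) = b i j` for all `i, j`; moreover `μ = Σ_{i≥0} ℓ^i·(lam i)ᵗ`.
(Recall `μ_j = μ (j-1)` in our `0`-indexing.) -/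
theorem unique_preimage_of_digits (ℓ n : ℕ) (hℓ : ℓ.Prime)
    (μ : ℕ → ℕ) (hμ : IsPartition n μ) (b : ℕ → ℕ → ℕ)
    (hbfin : ∀ j, (Function.support fun i => b i j).Finite)
    (hblt : ∀ i j, b i j < ℓ)
    (hb : ∀ j, 1 ≤ j → μ (j - 1) = μ j + ∑ᶠ i, b i j * ℓ ^ i) :
    ∃! p : (ℕ → ℕ) × (ℕ → ℕ → ℕ),
      (IsPartition n p.1 ∧ PartsPowersOf ℓ p.1 ∧
        ∀ i, IsPartition (pmult p.1 (ℓ ^ i)) (p.2 i) ∧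
          IsRegularPartition ℓ (p.2 i)) ∧
      (∀ i j, 1 ≤ j → pmult (p.2 i) j = b i j) ∧
      psiCo ℓ p.2 = μ := by
  obtain ⟨-, hμfin, rfl⟩ := hμ
  have hbs := finite_support_uncurry_of_eq_add (fun i => (pow_pos hℓ.pos i).ne') hμfin hbfin hb
  have hbi := finite_support_apply hbs
  set M : ℕ → ℕ := fun i => ∑ᶠ j, tailSum (b i) j
  have hM : (support M).Finite := finite_support_finsum (finite_support_uncurry_tailSum hbs)
  have hn : ∑ᶠ j, μ j = ∑ᶠ i, ℓ ^ i * M i := finsum_eq_finsum_mul_finsum_tailSum hbs hμfin hb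
  refine ⟨(powPartition ℓ M, fun i => partitionOfMult (b i)),
    ⟨⟨hn ▸ isPartition_powPartition hℓ.one_lt hM, partsPowersOf_powPartition hℓ.one_lt hM,
      fun i => ⟨pmult_powPartition_pow hℓ.one_lt hM i ▸ isPartition_partitionOfMult (hbi i),
        fun j hj => pmult_partitionOfMult (hbi i) hj ▸ hblt i j⟩⟩,
      fun i j hj => pmult_partitionOfMult (hbi i) hj, ?_⟩, ?_⟩
  · funext j
    simp only [psiCo, ptranspose_partitionOfMult (hbi _)]
    exact congrFun (eq_finsum_mul_tailSum hbs hμfin hb).symm j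
  · rintro ⟨ν, lam⟩ ⟨⟨⟨hν, hνfin, -⟩, hνpow, hlam⟩, hmult, -⟩
    obtain rfl : lam = fun i => partitionOfMult (b i) := funext fun i =>
      eq_partitionOfMult (hbi i) (hlam i).1.1 (hlam i).1.2.1 (hmult i)
    refine Prod.ext (eq_powPartition hℓ.one_lt hM hν hνfin hνpow fun i => ?_) rfl
    rw [← (hlam i).1.2.2, (isPartition_partitionOfMult (hbi i)).2.2]
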